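/- arXiv:1402.1860 — 2 statements merged into one kernel-verified Lean document; each statement's English description precedes it below -/
import Mathlib

section
/- For fixed ρ₁ ∈ (0,1) and fixed L > 0, the map ρ₂ ↦ d_KL(ρ₁,ρ₂|L) on [0,1) is strictly decreasing on [0,ρ₁] and strictly increasing on [ρ₁,1), and tends to +∞ as ρ₂ → 1⁻. -/
noncomputable def dKL (L r1 r2 : ℝ) : ℝ :=
  L * ((1 - r1 * r2) * (2 - r1 ^ 2 - r2 ^ 2) / ((1 - r1 ^ 2) * (1 - r2 ^ 2)) - 2)

/-!
Clearing denominators, `dKL L a x = L / (1 - a²) · (a - x)² (1 + a x) / (1 - x²)`. For this shape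
the difference of the values at `x` and `y` factors as `(y - x) · Q / ((1 - x²)(1 - y²))`, where `Q`
is a sum of three products each of which has a fixed sign when `x, y ≤ a` (all `≥ 0`) or when
`a ≤ x, y` (all `≤ 0`). As `x → 1⁻` the numerator tends to `(1 - a)² (1 + a) > 0` while
`1 - x² → 0⁺`.
-/

open Set Filter Topology

noncomputable def klShape (a x : ℝ) : ℝ := (a - x) ^ 2 * (1 + a * x) / (1 - x ^ 2)

lemma dKL_eq_mul_klShape (L : ℝ) {a x : ℝ} (ha : 1 - a ^ 2 ≠ 0) (hx : 1 - x ^ 2 ≠ 0) :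
    dKL L a x = L / (1 - a ^ 2) * klShape a x := by
  unfold dKL klShape
  field_simp
  ring

lemma klShape_sub_klShape (a : ℝ) {x y : ℝ} (hx : 1 - x ^ 2 ≠ 0) (hy : 1 - y ^ 2 ≠ 0) :
    klShape a x - klShape a y = (y - x) * ((1 - a ^ 2) * (1 - a * x) * (a - y) +
      a * (1 - x ^ 2) * (a ^ 2 - y ^ 2) + (1 - a ^ 2) * (1 + a * x) * (a - x)) /
      ((1 - x ^ 2) * (1 - y ^ 2)) := by
  unfold klShape
  field_simp
  ring

lemma klShape_strictAntiOn {a : ℝ} (ha : a < 1) : StrictAntiOn (klShape a) (Icc 0 a) := by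
  rintro x ⟨hx0, hxa⟩ y ⟨-, hya⟩ hxy
  have hx1 : 0 < 1 - x ^ 2 := by nlinarith
  have hy1 : 0 < 1 - y ^ 2 := by nlinarith
  rw [← sub_pos, klShape_sub_klShape a hx1.ne' hy1.ne']
  have ha2 : 0 < 1 - a ^ 2 := by nlinarith
  have hQ₁ : 0 ≤ (1 - a ^ 2) * (1 - a * x) * (a - y) :=
    mul_nonneg (mul_nonneg ha2.le (by nlinarith)) (by linarith)
  have hQ₂ : 0 ≤ a * (1 - x ^ 2) * (a ^ 2 - y ^ 2) :=
    mul_nonneg (mul_nonneg (by linarith) hx1.le) (by nlinarith)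
  have hQ₃ : 0 < (1 - a ^ 2) * (1 + a * x) * (a - x) :=
    mul_pos (mul_pos ha2 (by nlinarith)) (by linarith)
  exact div_pos (mul_pos (by linarith) (by linarith)) (mul_pos hx1 hy1)

lemma klShape_strictMonoOn {a : ℝ} (ha0 : 0 ≤ a) (ha : a < 1) :
    StrictMonoOn (klShape a) (Ico a 1) := by
  rintro x ⟨hax, hx⟩ y ⟨-, hy⟩ hxy
  have hx1 : 0 < 1 - x ^ 2 := by nlinarith
  have hy1 : 0 < 1 - y ^ 2 := by nlinarith
  rw [← sub_neg, klShape_sub_klShape a hx1.ne' hy1.ne']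
  have ha2 : 0 < 1 - a ^ 2 := by nlinarith
  have hQ₁ : (1 - a ^ 2) * (1 - a * x) * (a - y) < 0 :=
    mul_neg_of_pos_of_neg (mul_pos ha2 (by nlinarith)) (by linarith)
  have hQ₂ : a * (1 - x ^ 2) * (a ^ 2 - y ^ 2) ≤ 0 :=
    mul_nonpos_of_nonneg_of_nonpos (mul_nonneg ha0 hx1.le) (by nlinarith)
  have hQ₃ : (1 - a ^ 2) * (1 + a * x) * (a - x) ≤ 0 :=
    mul_nonpos_of_nonneg_of_nonpos (mul_nonneg ha2.le (by nlinarith)) (by linarith)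
  exact div_neg_of_neg_of_pos (mul_neg_of_pos_of_neg (by linarith) (by linarith)) (mul_pos hx1 hy1)

lemma tendsto_klShape_nhdsLT_one {a : ℝ} (ha : -1 < a) (ha1 : a ≠ 1) :
    Tendsto (klShape a) (𝓝[<] 1) atTop := by
  have hnum : Tendsto (fun x => (a - x) ^ 2 * (1 + a * x)) (𝓝[<] 1) (𝓝 ((a - 1) ^ 2 * (1 + a * 1))) :=
    (Continuous.tendsto (by fun_prop) 1).mono_left nhdsWithin_le_nhds
  have hden : Tendsto (fun x : ℝ => 1 - x ^ 2) (𝓝[<] 1) (𝓝[>] 0) := by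
    refine tendsto_nhdsWithin_iff.2 ⟨?_, ?_⟩
    · simpa using ((Continuous.tendsto (by fun_prop) 1).mono_left nhdsWithin_le_nhds :
        Tendsto (fun x : ℝ => 1 - x ^ 2) (𝓝[<] 1) (𝓝 (1 - 1 ^ 2)))
    · filter_upwards [Ioo_mem_nhdsLT (show (-1 : ℝ) < 1 by norm_num)] with x ⟨hx, hx1⟩
      show 0 < 1 - x ^ 2
      nlinarith
  have hpos : 0 < (a - 1) ^ 2 * (1 + a * 1) :=
    mul_pos (sq_pos_of_ne_zero (sub_ne_zero.2 ha1)) (by linarith)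
  exact (hnum.pos_mul_atTop hpos (tendsto_inv_nhdsGT_zero.comp hden)).congr fun x => by
    simp [klShape, div_eq_mul_inv]

theorem stmt_10 (L r1 : ℝ) (hL : 0 < L) (h1 : r1 ∈ Set.Ioo (0 : ℝ) 1) :
    StrictAntiOn (fun r2 => dKL L r1 r2) (Set.Icc 0 r1) ∧
      StrictMonoOn (fun r2 => dKL L r1 r2) (Set.Ico r1 1) ∧
      Filter.Tendsto (fun r2 => dKL L r1 r2) (nhdsWithin 1 (Set.Iio 1)) Filter.atTop := by
  obtain ⟨hr0, hr1⟩ := h1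
  have hc : 0 < L / (1 - r1 ^ 2) := div_pos hL (by nlinarith)
  have heq : EqOn (fun x => L / (1 - r1 ^ 2) * klShape r1 x) (dKL L r1) (Ioo (-1) 1) :=
    fun x ⟨hx, hx1⟩ => (dKL_eq_mul_klShape L (by nlinarith) (by nlinarith)).symm
  refine ⟨?_, ?_, ?_⟩
  · refine StrictAntiOn.congr (fun x hx y hy hxy => ?_) (heq.mono ?_)
    · exact mul_lt_mul_of_pos_left (klShape_strictAntiOn hr1 hx hy hxy) hc
    · exact fun x ⟨hx, hx1⟩ => ⟨by linarith, by linarith⟩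
  · refine StrictMonoOn.congr (fun x hx y hy hxy => ?_) (heq.mono ?_)
    · exact mul_lt_mul_of_pos_left (klShape_strictMonoOn hr0.le hr1 hx hy hxy) hc
    · exact fun x ⟨hx, hx1⟩ => ⟨by linarith, hx1⟩
  · refine ((tendsto_klShape_nhdsLT_one (by linarith) hr1.ne).const_mul_atTop hc).congr' ?_
    filter_upwards [Ioo_mem_nhdsLT (show (-1 : ℝ) < 1 by norm_num)] with x hx
    exact heq hx
end

section
/- For all L ≥ 1 and ρ₁,ρ₂ ∈ [0,1), d_KL(ρ₁,ρ₂|L) ≥ d_H(ρ₁,ρ₂|L). -/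
noncomputable def dH (L r1 r2 : ℝ) : ℝ :=
  1 - (4 * Real.sqrt ((1 - r1 ^ 2) * (1 - r2 ^ 2)) / (4 - (r1 + r2) ^ 2)) ^ L

theorem stmt_19 (L r1 r2 : ℝ) (hL : 1 ≤ L)
    (h1 : r1 ∈ Set.Ico (0 : ℝ) 1) (h2 : r2 ∈ Set.Ico (0 : ℝ) 1) :
    dH L r1 r2 ≤ dKL L r1 r2 := by
  obtain ⟨hr1, hr1'⟩ := h1
  obtain ⟨hr2, hr2'⟩ := h2
  have ha : (0:ℝ) < (1 - r1 ^ 2) * (1 - r2 ^ 2) := by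
    apply mul_pos <;> nlinarith
  set s : ℝ := Real.sqrt ((1 - r1 ^ 2) * (1 - r2 ^ 2)) with hs_def
  have hs : 0 < s := Real.sqrt_pos.mpr ha
  have hs2 : s ^ 2 = (1 - r1 ^ 2) * (1 - r2 ^ 2) := Real.sq_sqrt ha.le
  have hD : (0:ℝ) < 4 - (r1 + r2) ^ 2 := by nlinarith
  have hv : (0:ℝ) ≤ r1 * r2 := mul_nonneg hr1 hr2
  have hu : (r1 - r2) ^ 2 ≤ 1 := by nlinarith
  -- 4 s ≤ D
  have hsq : (4 * s) ^ 2 ≤ (4 - (r1 + r2) ^ 2) ^ 2 := by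
    nlinarith [sq_nonneg (r1 - r2), mul_nonneg (sq_nonneg (r1 - r2)) hv]
  have hDs : 4 * s ≤ 4 - (r1 + r2) ^ 2 := by nlinarith
  have hN : (0:ℝ) ≤ (r1 - r2) ^ 2 * (1 + r1 * r2) := by positivity
  -- main cleared inequality
  have hmain : (4 - (r1 + r2) ^ 2 - 4 * s) * ((1 - r1 ^ 2) * (1 - r2 ^ 2))
      ≤ ((r1 - r2) ^ 2 * (1 + r1 * r2)) * (4 - (r1 + r2) ^ 2) := by
    have hcancel : (0:ℝ) < 4 - (r1 + r2) ^ 2 + 4 * s := by linarith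
    have e1 : (4 - (r1 + r2) ^ 2 - 4 * s) * ((1 - r1 ^ 2) * (1 - r2 ^ 2))
        * (4 - (r1 + r2) ^ 2 + 4 * s)
        = ((r1 - r2) ^ 2 * ((r1 - r2) ^ 2 + 8 * r1 * r2 + 8))
          * ((1 - r1 ^ 2) * (1 - r2 ^ 2)) := by
      linear_combination (-16 * ((1 - r1 ^ 2) * (1 - r2 ^ 2))) * hs2
    have h32 : ((r1 - r2) ^ 2 * ((r1 - r2) ^ 2 + 8 * r1 * r2 + 8))
        * ((1 - r1 ^ 2) * (1 - r2 ^ 2))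
        ≤ 32 * ((r1 - r2) ^ 2 * (1 + r1 * r2)) * ((1 - r1 ^ 2) * (1 - r2 ^ 2)) := by
      nlinarith [mul_nonneg (sq_nonneg (r1 - r2)) ha.le, ha.le, sq_nonneg (r1 - r2)]
    have e2 : 32 * ((r1 - r2) ^ 2 * (1 + r1 * r2)) * ((1 - r1 ^ 2) * (1 - r2 ^ 2))
        = ((r1 - r2) ^ 2 * (1 + r1 * r2)) * (4 * s) * (8 * s) := by
      linear_combination (-32 * ((r1 - r2) ^ 2 * (1 + r1 * r2))) * hs2
    have hD8 : ((r1 - r2) ^ 2 * (1 + r1 * r2)) * (4 * s) * (8 * s)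
        ≤ ((r1 - r2) ^ 2 * (1 + r1 * r2)) * (4 - (r1 + r2) ^ 2)
          * (4 - (r1 + r2) ^ 2 + 4 * s) := by
      apply mul_le_mul (mul_le_mul_of_nonneg_left hDs hN) (by linarith)
        (by positivity) (mul_nonneg hN hD.le)
    have hprod : (4 - (r1 + r2) ^ 2 - 4 * s) * ((1 - r1 ^ 2) * (1 - r2 ^ 2))
        * (4 - (r1 + r2) ^ 2 + 4 * s)
        ≤ ((r1 - r2) ^ 2 * (1 + r1 * r2)) * (4 - (r1 + r2) ^ 2)
          * (4 - (r1 + r2) ^ 2 + 4 * s) := by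
      rw [e1]; linarith
    exact le_of_mul_le_mul_right hprod hcancel
  -- L = 1 inequality with divisions
  have hL1 : 1 - 4 * s / (4 - (r1 + r2) ^ 2)
      ≤ (1 - r1 * r2) * (2 - r1 ^ 2 - r2 ^ 2) / ((1 - r1 ^ 2) * (1 - r2 ^ 2)) - 2 := by
    have e2 : (1 - r1 * r2) * (2 - r1 ^ 2 - r2 ^ 2) / ((1 - r1 ^ 2) * (1 - r2 ^ 2)) - 2
        = ((r1 - r2) ^ 2 * (1 + r1 * r2)) / ((1 - r1 ^ 2) * (1 - r2 ^ 2)) := by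
      rw [sub_eq_iff_eq_add, div_add' _ _ _ ha.ne', div_left_inj' ha.ne']
      ring
    have e3 : 1 - 4 * s / (4 - (r1 + r2) ^ 2)
        = (4 - (r1 + r2) ^ 2 - 4 * s) / (4 - (r1 + r2) ^ 2) := by
      field_simp
    rw [e2, e3, div_le_div_iff₀ hD ha]
    exact hmain
  -- Bernoulli for rpow
  have hb0 : (0:ℝ) ≤ 4 * s / (4 - (r1 + r2) ^ 2) := by positivity
  have hbern : 1 + L * (4 * s / (4 - (r1 + r2) ^ 2) - 1)
      ≤ (4 * s / (4 - (r1 + r2) ^ 2)) ^ L := by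
    have := one_add_mul_self_le_rpow_one_add
      (by linarith : (-1:ℝ) ≤ 4 * s / (4 - (r1 + r2) ^ 2) - 1) hL
    simpa using this
  have hdH : dH L r1 r2 ≤ L * (1 - 4 * s / (4 - (r1 + r2) ^ 2)) := by
    unfold dH
    rw [← hs_def]
    nlinarith [hbern]
  have hstep : L * (1 - 4 * s / (4 - (r1 + r2) ^ 2)) ≤ dKL L r1 r2 := by
    unfold dKL
    have := mul_le_mul_of_nonneg_left hL1 (by linarith : (0:ℝ) ≤ L)
    linarith
  linarith
end
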